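/- For N ≥ 4, β > 0, σ > 0, ε > 0, the transition point λ_eXp = (σε/β) · (-ln(1 - 2C_{σ,ε}(1/2 - 1/N))) of the eXp-mesh satisfies λ_eXp ≤ 1/2 provided ε ≤ (β/(2σ)) · (ln(N/2))^{-1}, where C_{σ,ε} = 1 - exp(-β/(σε)). -/
import Mathlib


theorem stmt_7 (N : ℕ) (hN : 4 ≤ N) (β σ ε : ℝ) (hβ : 0 < β) (hσ : 0 < σ) (hε : 0 < ε)
    (hass : ε ≤ β / (2 * σ) * (Real.log ((N : ℝ) / 2))⁻¹) :
    (σ * ε / β) *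
        (-Real.log (1 - 2 * (1 - Real.exp (-β / (σ * ε))) * (1 / 2 - 1 / (N : ℝ))))
      ≤ 1 / 2 := by
  have hσε : 0 < σ * ε := mul_pos hσ hε
  set a : ℝ := β / (σ * ε) with ha_def
  have ha : 0 < a := div_pos hβ hσε
  have hN4 : (4 : ℝ) ≤ (N : ℝ) := by exact_mod_cast hN
  have hN0 : (0 : ℝ) < (N : ℝ) := by linarith
  have hlogN : 0 < Real.log ((N : ℝ) / 2) := by
    apply Real.log_pos
    rw [lt_div_iff₀ (by norm_num : (0:ℝ) < 2)]; linarith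
  -- from hass : log(N/2) ≤ a/2
  have hlog_le : Real.log ((N : ℝ) / 2) ≤ a / 2 := by
    have h1 : ε * Real.log ((N : ℝ) / 2) ≤ β / (2 * σ) := by
      have := mul_le_mul_of_nonneg_right hass hlogN.le
      rwa [mul_assoc, inv_mul_cancel₀ hlogN.ne', mul_one] at this
    rw [le_div_iff₀ (by norm_num : (0:ℝ) < 2), ha_def, le_div_iff₀ hσε] at *
    rw [le_div_iff₀ (by positivity : (0:ℝ) < 2 * σ)] at h1
    nlinarith
  set x : ℝ := Real.exp (-β / (σ * ε)) with hx_def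
  have hx_pos : 0 < x := Real.exp_pos _
  have hx_eq : x = Real.exp (-a) := by rw [hx_def, ha_def, neg_div]
  -- rewrite the argument
  have harg : 1 - 2 * (1 - x) * (1 / 2 - 1 / (N : ℝ)) = 2 / (N : ℝ) + x * (1 - 2 / (N : ℝ)) := by
    ring
  have h2N : 2 / (N : ℝ) ≤ 1 / 2 := by
    rw [div_le_div_iff₀ hN0 (by norm_num)]; linarith
  have hargpos : Real.exp (-(a / 2)) ≤ 1 - 2 * (1 - x) * (1 / 2 - 1 / (N : ℝ)) := by
    rw [harg]
    have hexp : Real.exp (-(a / 2)) ≤ 2 / (N : ℝ) := by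
      have h := Real.exp_le_exp.mpr (by linarith : -(a / 2) ≤ -Real.log ((N : ℝ) / 2))
      rwa [show Real.exp (-Real.log ((N : ℝ) / 2)) = 2 / (N : ℝ) by
        rw [Real.exp_neg, Real.exp_log (by positivity), inv_div]] at h
    nlinarith [hx_pos]
  have hlog_ge : -(a / 2) ≤ Real.log (1 - 2 * (1 - x) * (1 / 2 - 1 / (N : ℝ))) := by
    rw [Real.le_log_iff_exp_le (lt_of_lt_of_le (Real.exp_pos _) hargpos)]
    exact hargpos
  have hfinal : -Real.log (1 - 2 * (1 - x) * (1 / 2 - 1 / (N : ℝ))) ≤ a / 2 := by linarith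
  calc (σ * ε / β) * (-Real.log (1 - 2 * (1 - x) * (1 / 2 - 1 / (N : ℝ))))
      ≤ (σ * ε / β) * (a / 2) := by
        apply mul_le_mul_of_nonneg_left hfinal (by positivity)
    _ = 1 / 2 := by
        rw [ha_def]; field_simp
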